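/- arXiv:math/0404550 — 7 statements merged into one kernel-verified Lean document; each statement's English description precedes it below -/
import Mathlib

section
/- Let A be a (not necessarily associative) algebra over a field F of characteristic ≠ 2 belonging to the variety 𝒱. Then for all x, y, z ∈ A one has D_{xy,z} + D_{yz,x} + D_{zx,y} = 0 as linear operators on A. -/
set_option maxHeartbeats 4000000


/-- `D_{x,y} = L_{[x,y]} - [L_x, L_y]` for the (nonassociative) bilinear
multiplication `mul` on `A`. -/
def Dop {F A : Type*} [Field F] [AddCommGroup A] [Module F A]
    (mul : A →ₗ[F] A →ₗ[F] A) (x y : A) : A →ₗ[F] A :=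
  mul (mul x y - mul y x) - (mul x ∘ₗ mul y - mul y ∘ₗ mul x)

/-- If `A` is a noncommutative Jordan algebra over a field of characteristic `≠ 2`
in which every `D_{x,y}` is a derivation (i.e. `A` lies in the variety `𝒱`), then
`D_{xy,z} + D_{yz,x} + D_{zx,y} = 0`. -/
theorem stmt0 {F A : Type*} [Field F] [AddCommGroup A] [Module F A]
    (hchar : (2 : F) ≠ 0)
    (mul : A →ₗ[F] A →ₗ[F] A)
    (flex : ∀ x y : A, mul (mul x y) x = mul x (mul y x))
    (jordan : ∀ x y : A, mul (mul x y) (mul x x) = mul x (mul y (mul x x)))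
    (hder : ∀ x y a b : A,
      Dop mul x y (mul a b) = mul (Dop mul x y a) b + mul a (Dop mul x y b)) :
    ∀ x y z : A,
      Dop mul (mul x y) z + Dop mul (mul y z) x + Dop mul (mul z x) y = 0 := by
  -- multilinear form of flexibility
  have flexM : ∀ u v w : A,
      mul (mul u v) w + mul (mul w v) u = mul u (mul v w) + mul w (mul v u) := by
    intro u v w
    have h := flex (u + w) v
    simp only [map_add, LinearMap.add_apply] at h
    linear_combination (norm := module) h - flex u v - flex w v
  -- flexibility multiplied on the left
  have flexL : ∀ p u v w : A,
      mul p (mul (mul u v) w) + mul p (mul (mul w v) u)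
        = mul p (mul u (mul v w)) + mul p (mul w (mul v u)) := by
    intro p u v w
    have h := congrArg (fun s => mul p s) (flexM u v w)
    simpa only [map_add] using h
  -- flexibility multiplied on the right
  have flexR : ∀ p u v w : A,
      mul (mul (mul u v) w) p + mul (mul (mul w v) u) p
        = mul (mul u (mul v w)) p + mul (mul w (mul v u)) p := by
    intro p u v w
    have h := congrArg (fun s => mul s p) (flexM u v w)
    simpa only [map_add, LinearMap.add_apply] using h
  -- full multilinearization of the Jordan identity
  have jordanM : ∀ u v w t : A,
      mul (mul u t) (mul v w) + mul (mul u t) (mul w v) + mul (mul v t) (mul u w) + mul (mul v t) (mul w u) + mul (mul w t) (mul u v) + mul (mul w t) (mul v u)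
        = mul u (mul t (mul v w)) + mul u (mul t (mul w v)) + mul v (mul t (mul u w)) + mul v (mul t (mul w u)) + mul w (mul t (mul u v)) + mul w (mul t (mul v u)) := by
    intro u v w t
    have h1 := jordan (u + v + w) t
    have h2 := jordan (u + v) t
    have h3 := jordan (u + w) t
    have h4 := jordan (v + w) t
    simp only [map_add, LinearMap.add_apply] at h1 h2 h3 h4
    linear_combination (norm := module)
      h1 - h2 - h3 - h4 + jordan u t + jordan v t + jordan w t
  -- expanded form of the derivation hypothesis
  have hderM : ∀ u v a b : A,
      mul (mul u v) (mul a b) - mul (mul v u) (mul a b)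
        - mul u (mul v (mul a b)) + mul v (mul u (mul a b))
      = mul (mul (mul u v) a) b - mul (mul (mul v u) a) b
        - mul (mul u (mul v a)) b + mul (mul v (mul u a)) b
        + mul a (mul (mul u v) b) - mul a (mul (mul v u) b)
        - mul a (mul u (mul v b)) + mul a (mul v (mul u b)) := by
    intro u v a b
    have h := hder u v a b
    simp only [Dop, map_sub, map_add, LinearMap.sub_apply, LinearMap.add_apply,
      LinearMap.coe_comp, Function.comp_apply] at h
    linear_combination (norm := module) h
  intro x y z
  ext a
  have key : (2 : F) •
      ((Dop mul (mul x y) z + Dop mul (mul y z) x + Dop mul (mul z x) y) a) = 0 := by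
    simp only [Dop, map_sub, map_add, LinearMap.sub_apply, LinearMap.add_apply,
      LinearMap.coe_comp, Function.comp_apply]
    linear_combination (norm := module)
      (flexL x y z a)
      + (flexR x y z a)
      - (flexR x y a z)
      + (flexL x z y a)
      + (flexR x z y a)
      + (flexL y x z a)
      + (flexR y x z a)
      - (flexR y x a z)
      + (flexL y z x a)
      + (flexR y z x a)
      + (flexL z x y a)
      + (flexR z x y a)
      - (flexR z x a y)
      + (flexL z y x a)
      + (flexR z y x a)
      + (flexR a x y z)
      + (flexR a x z y)
      + (flexR a y x z)
      - (flexM z a (mul x y))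
      + (2:F) • (jordanM x y z a)
      - (hderM x y z a)
      - (jordanM x y a z)
      - (flexM y a (mul x z))
      + (hderM x z y a)
      - (jordanM x z a y)
      + (flexM y (mul x a) z)
      - (hderM x a y z)
      - (hderM x a z y)
      - (flexM z a (mul y x))
      - (flexM x a (mul y z))
      - (hderM y z x a)
      - (jordanM y z a x)
      + (flexM x (mul y a) z)
      - (hderM y a x z)
      - (hderM y a z x)
      - (flexM y a (mul z x))
      - (flexM x a (mul z y))
      + (flexM x (mul z a) y)
      - (hderM z a x y)
      - (hderM z a y x)
  rcases smul_eq_zero.mp key with h | h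
  · exact absurd h hchar
  · simpa using h
end

section
/- Let A be a (not necessarily associative) algebra over a field F of characteristic ≠ 2 such that D_{x,y} is a derivation of A for all x, y ∈ A. Then D_{[x,y],z} + D_{[y,z],x} + D_{[z,x],y} = 0 as linear operators on A, for all x, y, z ∈ A. -/
/-- If every `D_{x,y}` is a derivation of the algebra `A` over a field of
characteristic `≠ 2`, then `D_{[x,y],z} + D_{[y,z],x} + D_{[z,x],y} = 0`. -/
theorem stmt1 {F A : Type*} [Field F] [AddCommGroup A] [Module F A]
    (hchar : (2 : F) ≠ 0)
    (mul : A →ₗ[F] A →ₗ[F] A)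
    (hder : ∀ x y a b : A,
      Dop mul x y (mul a b) = mul (Dop mul x y a) b + mul a (Dop mul x y b)) :
    ∀ x y z : A,
      Dop mul (mul x y - mul y x) z + Dop mul (mul y z - mul z y) x +
        Dop mul (mul z x - mul x z) y = 0 := by
  intro x y z
  ext a
  have h1 := hder x y z a
  have h2 := hder x z y a
  have h3 := hder y z x a
  simp only [Dop, LinearMap.sub_apply, LinearMap.add_apply, LinearMap.comp_apply,
    LinearMap.zero_apply, map_sub, map_add] at h1 h2 h3 ⊢
  linear_combination (norm := abel1) h2 - h1 - h3
end

section
/- Let A be a noncommutative Jordan algebra over a field F of characteristic ≠ 2. Then, writing x∘y := xy + yx, one has D_{x∘y,z} + D_{y∘z,x} + D_{z∘x,y} = 0 as linear operators on A, for all x, y, z ∈ A. -/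
/-- If `A` is a noncommutative Jordan algebra (flexible + Jordan identity) over a
field of characteristic `≠ 2`, then, with `x∘y = xy + yx`,
`D_{x∘y,z} + D_{y∘z,x} + D_{z∘x,y} = 0`. -/
theorem stmt2 {F A : Type*} [Field F] [AddCommGroup A] [Module F A]
    (hchar : (2 : F) ≠ 0)
    (mul : A →ₗ[F] A →ₗ[F] A)
    (flex : ∀ x y : A, mul (mul x y) x = mul x (mul y x))
    (jordan : ∀ x y : A, mul (mul x y) (mul x x) = mul x (mul y (mul x x))) :
    ∀ x y z : A,
      Dop mul (mul x y + mul y x) z + Dop mul (mul y z + mul z y) x +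
        Dop mul (mul z x + mul x z) y = 0 := by
  -- Fully linearized flexible law
  have flexZ : ∀ a b c : A,
      mul (mul a b) c + mul (mul c b) a = mul a (mul b c) + mul c (mul b a) := by
    intro a b c
    have h := flex (a + c) b
    simp only [map_add, LinearMap.add_apply] at h
    linear_combination (norm := abel) h - flex a b - flex c b
  have flexZL : ∀ d a b c : A,
      mul d (mul (mul a b) c) + mul d (mul (mul c b) a) =
        mul d (mul a (mul b c)) + mul d (mul c (mul b a)) := by
    intro d a b c
    have h := congrArg (mul d) (flexZ a b c)
    simpa only [map_add] using h
  have flexZR : ∀ d a b c : A,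
      mul (mul (mul a b) c) d + mul (mul (mul c b) a) d =
        mul (mul a (mul b c)) d + mul (mul c (mul b a)) d := by
    intro d a b c
    have h := congrArg (fun t => mul t d) (flexZ a b c)
    simpa only [map_add, LinearMap.add_apply] using h
  -- Partial linearization of the Jordan identity (linear in `c`, quadratic in `a`)
  have hq : ∀ a c b : A,
      (mul (mul c b) (mul a a) - mul c (mul b (mul a a))) +
        (mul (mul a b) (mul c a) - mul a (mul b (mul c a))) +
        (mul (mul a b) (mul a c) - mul a (mul b (mul a c))) = 0 := by
    intro a c b
    have hp := jordan (a + c) b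
    have hm := jordan (a - c) b
    have hc := jordan c b
    simp only [map_add, map_sub, LinearMap.add_apply, LinearMap.sub_apply] at hp hm
    set qE := (mul (mul c b) (mul a a) - mul c (mul b (mul a a))) +
        (mul (mul a b) (mul c a) - mul a (mul b (mul c a))) +
        (mul (mul a b) (mul a c) - mul a (mul b (mul a c))) with hqE
    have h2 : qE + qE = 0 := by
      rw [hqE]
      linear_combination (norm := abel) hp - hm - hc - hc
    have h2' : (2 : F) • qE = 0 := by rw [two_smul]; exact h2
    exact (smul_eq_zero.mp h2').resolve_left hchar
  -- Full linearization of the Jordan identity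
  have sfull : ∀ a b c d : A,
      (mul (mul a d) (mul b c) - mul a (mul d (mul b c))) +
        (mul (mul a d) (mul c b) - mul a (mul d (mul c b))) +
        (mul (mul b d) (mul a c) - mul b (mul d (mul a c))) +
        (mul (mul b d) (mul c a) - mul b (mul d (mul c a))) +
        (mul (mul c d) (mul a b) - mul c (mul d (mul a b))) +
        (mul (mul c d) (mul b a) - mul c (mul d (mul b a))) = 0 := by
    intro a b c d
    have hab := hq (a + b) c d
    simp only [map_add, LinearMap.add_apply] at hab
    linear_combination (norm := abel) hab - hq a c d - hq b c d
  intro x y z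
  apply LinearMap.ext
  intro w
  simp only [Dop, LinearMap.sub_apply, LinearMap.add_apply, LinearMap.coe_comp,
    Function.comp_apply, LinearMap.zero_apply, map_add, map_sub]
  linear_combination (norm := abel)
    - flexZ (mul x w) y z - flexZ y z (mul x w)
    - flexZ (mul y w) x z - flexZ x z (mul y w)
    - flexZ (mul z w) x y - flexZ x y (mul z w)
    + flexZ y (mul w x) z + flexZ x (mul w y) z + flexZ x (mul w z) y
    - sfull x y z w
    + flexZR w x y z + flexZL z x y w
    + flexZR w x z y + flexZL y x z w
    + flexZR z x w y + flexZR y x w z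
    + flexZR w y x z + flexZL z y x w
    + flexZL x y z w + flexZR x y w z
    + flexZL y z x w + flexZL x z y w
end

section
/- Let J be a generalized Jordan triple system over a field F of characteristic ≠ 2, 3 containing an element e such that eee = e, eex = xee for all x ∈ J, and the map U_e: x ↦ exe is surjective. Then eex = x = xee for all x ∈ J; in particular, e is a two-sided unit of the homotope algebra J^{(e)}. -/
/-- Let `J` be a generalized Jordan triple system (trilinear product `T` satisfying
`uv(xyz) = (uvx)yz − x(vuy)z + xy(uvz)`) over a field of characteristic `≠ 2, 3`,
with an element `e` such that `eee = e`, `eex = xee` for all `x`, and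
`U_e : x ↦ exe` surjective.  Then `eex = x = xee` for every `x`, i.e. `e` is a
two-sided unit of the homotope algebra `J⁽ᵉ⁾` (product `x·y = xey`). -/
theorem stmt3 {F J : Type*} [Field F] [AddCommGroup J] [Module F J]
    (hchar2 : (2 : F) ≠ 0) (hchar3 : (3 : F) ≠ 0)
    (T : J →ₗ[F] J →ₗ[F] J →ₗ[F] J)
    (gjts : ∀ u v x y z : J,
      T u v (T x y z) = T (T u v x) y z - T x (T v u y) z + T x y (T u v z))
    (e : J) (he : T e e e = e) (hee : ∀ x : J, T e e x = T x e e)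
    (hsurj : Function.Surjective (fun x : J => T e x e)) :
    ∀ x : J, T e e x = x ∧ T x e e = x := by
  have key : ∀ x : J, T e e (T e x e) = T e x e := by
    intro x
    set a := T e x e with ha
    set b := T e e a with hb
    set c := T e (T e e x) e with hc
    -- (A) : b = a - c + a
    have hA : b = a - c + a := by
      have h := gjts e e e x e
      rw [he] at h
      exact h
    -- (B) : a = b - c + b
    have hB : a = b - c + b := by
      have h := gjts e x e e e
      rw [he, ← hee (T e x e), ← hee x] at h
      exact h
    have h := hB
    rw [hA] at h
    -- h : a = (a - c + a) - c + (a - c + a)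
    have h3 : (3 : ℤ) • (a - c) = 0 := by
      rw [show (3 : ℤ) • (a - c) = ((a - c + a) - c + (a - c + a)) - a by abel, ← h]
      abel
    have h3F : ((3 : ℤ) : F) • (a - c) = 0 := by
      rw [Int.cast_smul_eq_zsmul]; exact h3
    have hac : a - c = 0 := by
      rcases smul_eq_zero.mp h3F with hz | hz
      · exact absurd (by exact_mod_cast hz) hchar3
      · exact hz
    have hca : c = a := by
      have := sub_eq_zero.mp hac; exact this.symm
    rw [hA, hca]; abel
  intro x
  obtain ⟨w, hw⟩ := hsurj x
  simp only at hw
  have h1 : T e e x = x := by rw [← hw]; exact key w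
  exact ⟨h1, by rw [← hee]; exact h1⟩
end

section
/- Let J be a generalized Jordan triple system over a field F of characteristic ≠ 2, 3 containing an element e such that eee = e, eex = xee for all x ∈ J, and the map U_e: x ↦ exe is surjective. Define x̄ := exe and x·y := xey. Then for all x, y ∈ J: the double bar recovers x (i.e., \overline{\bar{x}} = x), exy = x̄·y, xye = x·ȳ, and \overline{x·y} = ȳ·x̄; that is, x ↦ x̄ is an involution of the homotope algebra J^{(e)}. -/
private lemma aux1 {G : Type*} [AddCommGroup G] {a c : G}
    (h : a = a - c + a - c + (a - c + a)) : c + c + c = a + a + a := by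
  have h' : c + c + c = a + a + a + a - (a - c + a - c + (a - c + a)) := by abel
  rw [← h] at h'
  rw [h']; abel

private lemma aux2 {G : Type*} [AddCommGroup G] {a q : G}
    (h : a = a - q + a) : q = a := by
  have h' : q = a + a - (a - q + a) := by abel
  rw [← h] at h'
  rw [h']; abel

private lemma aux3 {G : Type*} [AddCommGroup G] {p q r : G}
    (h : p = p - q + r) : q = r := by
  have h' : q = p + r - (p - q + r) := by abel
  rw [← h] at h'
  rw [h']; abel

private lemma aux4 {G : Type*} [AddCommGroup G] {p r : G}
    (h : p = r - p + p) : p = r := by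
  rw [h]; abel

/-- Let `J` be a generalized Jordan triple system over a field of characteristic
`≠ 2, 3` with an element `e` such that `eee = e`, `eex = xee` for all `x`, and
`U_e : x ↦ exe` surjective.  With `x̄ := exe` and `x·y := xey`:
`x̄̄ = x`, `exy = x̄·y`, `xye = x·ȳ` and `(x·y)‾ = ȳ·x̄`; in particular `x ↦ x̄`
is an involution of the homotope algebra `J⁽ᵉ⁾`. -/
theorem stmt4 {F J : Type*} [Field F] [AddCommGroup J] [Module F J]
    (hchar2 : (2 : F) ≠ 0) (hchar3 : (3 : F) ≠ 0)
    (T : J →ₗ[F] J →ₗ[F] J →ₗ[F] J)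
    (gjts : ∀ u v x y z : J,
      T u v (T x y z) = T (T u v x) y z - T x (T v u y) z + T x y (T u v z))
    (e : J) (he : T e e e = e) (hee : ∀ x : J, T e e x = T x e e)
    (hsurj : Function.Surjective (fun x : J => T e x e)) :
    ∀ x y : J,
      T e (T e x e) e = x ∧
      T e x y = T (T e x e) e y ∧
      T x y e = T x e (T e y e) ∧
      T e (T x e y) e = T (T e y e) e (T e x e) := by
  -- notation: a = T e v e, b = T e e (T e v e), c = T e (T e e v) e
  have h1 : ∀ v : J, T e e (T e v e)
      = T e v e - T e (T e e v) e + T e v e := by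
    intro v
    have h := gjts e e e v e
    rw [he] at h
    exact h
  -- U (A v) = U v
  have hUA : ∀ v : J, T e (T e e v) e = T e v e := by
    intro v
    have h2 := gjts e v e e e
    rw [he, ← hee (T e v e), ← hee v, h1 v] at h2
    have h3 := aux1 h2
    have hc : (3 : F) • T e (T e e v) e = (3 : F) • T e v e := by
      have e1 : (3 : F) • T e (T e e v) e
          = T e (T e e v) e + T e (T e e v) e + T e (T e e v) e := by module
      have e2 : (3 : F) • T e v e = T e v e + T e v e + T e v e := by module
      rw [e1, e2]; exact h3
    exact smul_right_injective J hchar3 hc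
  -- A (U v) = U v
  have hAU : ∀ v : J, T e e (T e v e) = T e v e := by
    intro v
    rw [h1 v, hUA v]; abel
  -- A = id
  have hA : ∀ x : J, T e e x = x := by
    intro x
    obtain ⟨v, rfl⟩ := hsurj x
    exact hAU v
  have hA' : ∀ x : J, T x e e = x := fun x => (hee x).symm.trans (hA x)
  -- T e (T v u e) e = T u v e
  have hU2 : ∀ u v : J, T e (T v u e) e = T u v e := by
    intro u v
    have h := gjts u v e e e
    rw [he] at h
    simp only [hA, hA'] at h
    exact aux2 h
  -- goal 1 : involution
  have hbar : ∀ x : J, T e (T e x e) e = x := by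
    intro x
    have := hU2 x e
    rwa [hA' x] at this
  -- goal 2
  have hG2 : ∀ x z : J, T e x z = T (T e x e) e z := by
    intro x z
    have h := gjts e x e e z
    simp only [hA, hA'] at h
    exact aux4 h
  -- goal 3
  have hG3 : ∀ x y : J, T x y e = T x e (T e y e) := by
    intro x y
    have h := gjts e y x e e
    simp only [hA, hA'] at h
    exact aux3 h
  intro x y
  refine ⟨hbar x, hG2 x y, hG3 x y, ?_⟩
  -- goal 4
  have hk : T x (T e y e) e = T x e y := by rw [hG3 x (T e y e), hbar y]
  rw [← hk, hU2 (T e y e) x, hG3 (T e y e) x]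
end

section
/- Let J be a generalized Jordan triple system over a field F of characteristic ≠ 2, 3 containing an element e such that eee = e, eex = xee for all x ∈ J, and the map U_e: x ↦ exe is surjective. Define x·y := xey and x̄ := exe. Then the triple product is recovered from the binary product by xyz = x·(ȳ·z) − ȳ·(x·z) + (ȳ·x)·z for all x, y, z ∈ J. -/
/-- Let `J` be a generalized Jordan triple system over a field of characteristic
`≠ 2, 3` with an element `e` such that `eee = e`, `eex = xee` for all `x`, and
`U_e : x ↦ exe` surjective.  With `x·y := xey` and `x̄ := exe`, the triple product
is recovered as `xyz = x·(ȳ·z) − ȳ·(x·z) + (ȳ·x)·z`. -/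
theorem stmt5 {F J : Type*} [Field F] [AddCommGroup J] [Module F J]
    (hchar2 : (2 : F) ≠ 0) (hchar3 : (3 : F) ≠ 0)
    (T : J →ₗ[F] J →ₗ[F] J →ₗ[F] J)
    (gjts : ∀ u v x y z : J,
      T u v (T x y z) = T (T u v x) y z - T x (T v u y) z + T x y (T u v z))
    (e : J) (he : T e e e = e) (hee : ∀ x : J, T e e x = T x e e)
    (hsurj : Function.Surjective (fun x : J => T e x e)) :
    ∀ x y z : J,
      T x y z =
        T x e (T (T e y e) e z) - T (T e y e) e (T x e z) +
          T (T (T e y e) e x) e z := by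
  -- Step 1: T (T e w e) e e = T e w e for all w
  have hA : ∀ w : J, T (T e w e) e e = T e w e := by
    intro w
    have h1 := gjts e w e e e
    have h2 := gjts e e e w e
    rw [he, ← hee w, hee (T e w e)] at h1
    -- h1 : T e w e = T (T e w e) e e - T e (T e e w) e + T (T e w e) e e
    rw [he, hee (T e w e)] at h2
    -- h2 : T (T e w e) e e = T e w e - T e (T e e w) e + T e w e
    set a := T e w e with ha
    set A := T (T e w e) e e with hAA
    set B := T e (T e e w) e with hBB
    have h3 : a - A = (A - B + A) - (a - B + a) := by rw [← h1, ← h2]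
    have h4 : a - A + (a - A) + (a - A) = 0 := by nth_rewrite 3 [h3]; abel
    have h5 : (3 : F) • (a - A) = 0 := by
      rw [show (3 : F) = 1 + 1 + 1 by norm_num, add_smul, add_smul, one_smul]
      exact h4
    rcases smul_eq_zero.mp h5 with h | h
    · exact absurd h hchar3
    · exact (sub_eq_zero.mp h).symm
  -- Step 2: e is a unit:  T e e x = x and T x e e = x
  have hunit : ∀ x : J, T e e x = x := by
    intro x
    obtain ⟨w, hw⟩ := hsurj x
    simp only at hw
    rw [← hw, hee (T e w e), hA w]
  have hrunit : ∀ x : J, T x e e = x := fun x => (hee x).symm.trans (hunit x)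
  -- Step 3: U_e is an involution: T e (T e w e) e = w
  have hU2 : ∀ w : J, T e (T e w e) e = w := by
    intro w
    have h := gjts w e e e e
    simp only [he, hrunit, hunit] at h
    -- h : w = w - T e (T e w e) e + w
    calc T e (T e w e) e = w - (w - T e (T e w e) e + w) + w := by abel
      _ = w - w + w := by rw [← h]
      _ = w := by abel
  -- Final step
  intro x y z
  have h := gjts (T e y e) e x e z
  rw [hU2 y] at h
  -- h : T (T e y e) e (T x e z) = T (T (T e y e) e x) e z - T x y z + T x e (T (T e y e) e z)
  rw [h]
  abel
end

section
/- Let J be a generalized Jordan triple system over a field F of characteristic ≠ 2, 3 containing an element e such that eee = e, eex = xee for all x ∈ J, and the map U_e: x ↦ exe is surjective. Then the homotope algebra J^{(e)} (with product x·y := xey) is a noncommutative Jordan algebra: it is flexible, (x·y)·x = x·(y·x) for all x, y, and satisfies the Jordan identity (x·y)·(x·x) = x·(y·(x·x)) for all x, y. -/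
/-- `tE T e a b c` is the expression `a(bc) + (ba)c - b(ac)` in the homotope
algebra with product `p·q = T p e q`. -/
def tE {F J : Type*} [Field F] [AddCommGroup J] [Module F J]
    (T : J →ₗ[F] J →ₗ[F] J →ₗ[F] J) (e a b c : J) : J :=
  T a e (T b e c) + T (T b e a) e c - T b e (T a e c)

/-- `sE T e a b c` is the expression `(cb)a + c(ab) - (ca)b` in the homotope
algebra with product `p·q = T p e q`. -/
def sE {F J : Type*} [Field F] [AddCommGroup J] [Module F J]
    (T : J →ₗ[F] J →ₗ[F] J →ₗ[F] J) (e a b c : J) : J :=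
  T (T c e b) e a + T c e (T a e b) - T (T c e a) e b

set_option maxHeartbeats 1600000 in
/-- Let `J` be a generalized Jordan triple system over a field of characteristic
`≠ 2, 3` with an element `e` such that `eee = e`, `eex = xee` for all `x`, and
`U_e : x ↦ exe` surjective.  Then the homotope algebra `J⁽ᵉ⁾` (product
`x·y := xey`) is a noncommutative Jordan algebra: it is flexible and satisfies
the Jordan identity. -/
theorem stmt6 {F J : Type*} [Field F] [AddCommGroup J] [Module F J]
    (hchar2 : (2 : F) ≠ 0) (hchar3 : (3 : F) ≠ 0)
    (T : J →ₗ[F] J →ₗ[F] J →ₗ[F] J)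
    (gjts : ∀ u v x y z : J,
      T u v (T x y z) = T (T u v x) y z - T x (T v u y) z + T x y (T u v z))
    (e : J) (he : T e e e = e) (hee : ∀ x : J, T e e x = T x e e)
    (hsurj : Function.Surjective (fun x : J => T e x e)) :
    ∀ x y : J,
      T (T x e y) e x = T x e (T y e x) ∧
      T (T x e y) e (T x e x) = T x e (T y e (T x e x)) := by
  -- Step 1: `e` is a unit for the homotope product.
  have hU : ∀ x : J, T e e x = x := by
    intro x
    obtain ⟨a, ha⟩ := hsurj x
    simp only at ha
    subst ha
    have h1 := gjts e e e a e
    have h2 := gjts e a e e e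
    rw [he, hee a] at h1
    rw [he, ← hee (T e a e)] at h2
    have h3 : (3:F) • (T e e (T e a e)) = (3:F) • (T e a e) := by
      linear_combination (norm := module) h1 - h2
    exact smul_right_injective J hchar3 h3
  have hU' : ∀ x : J, T x e e = x := fun x => (hee x).symm.trans (hU x)
  -- Step 2: properties of the map `S x = T e x e`.
  have hS2 : ∀ x : J, T e (T e x e) e = x := by
    intro x
    have h := gjts x e e e e
    simp only [he, hU, hU'] at h
    linear_combination (norm := module) h
  have hB : ∀ x y : J, T y (T e x e) e = T y e x := by
    intro x y
    have h := gjts x e y e e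
    rw [hU', hU', hU'] at h
    linear_combination (norm := module) h
  have hrev0 : ∀ x y : J, T e (T y x e) e = T x y e := by
    intro x y
    have h := gjts x y e e e
    rw [he, hU', hU] at h
    linear_combination (norm := module) h
  -- `S` is an anti-homomorphism of the homotope product.
  have hAnti : ∀ a b : J, T e (T a e b) e = T (T e b e) e (T e a e) := by
    intro a b
    have h1 : T e (T a e b) e = T (T e b e) a e := by
      rw [← hB b a]; exact hrev0 (T e b e) a
    have h2 := hB (T e a e) (T e b e)
    rw [hS2] at h2
    exact h1.trans h2
  -- Triples with `S`-twisted middle slot reduce to homotope products.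
  have hTdef : ∀ a b c : J, T a (T e b e) c = tE T e a b c := by
    intro a b c
    have h := gjts b e a e c
    simp only [tE]
    linear_combination (norm := module) h
  have hST : ∀ a b c : J,
      T e (tE T e a b c) e = sE T e (T e a e) (T e b e) (T e c e) := by
    intro a b c
    simp only [tE, sE, map_add, map_sub, LinearMap.add_apply, LinearMap.sub_apply,
      hAnti]
  have hTS : ∀ a b c : J,
      T e (sE T e a b c) e = tE T e (T e a e) (T e b e) (T e c e) := by
    intro a b c
    have h := congrArg (fun w : J => T e w e) (hST (T e a e) (T e b e) (T e c e))
    simp only [hS2] at h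
    exact h.symm
  have hmid : ∀ v u y : J, T (T e v e) u (T e y e) = T e (sE T e v u y) e := by
    intro v u y
    calc T (T e v e) u (T e y e)
        = T (T e v e) (T e (T e u e) e) (T e y e) := by rw [hS2]
      _ = tE T e (T e v e) (T e u e) (T e y e) := hTdef _ _ _
      _ = T e (sE T e v u y) e := (hTS v u y).symm
  -- Step 3: the master identity for the homotope product, and its S-image.
  have starT : ∀ u v x y z : J,
      tE T e u v (tE T e x y z) =
        tE T e (tE T e u v x) y z - tE T e x (sE T e v u y) z +
          tE T e x y (tE T e u v z) := by
    intro u v x y z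
    have h := gjts u (T e v e) x (T e y e) z
    rw [hmid v u y] at h
    simp only [hTdef] at h
    exact h
  have starS : ∀ u v x y z : J,
      sE T e u v (sE T e x y z) =
        sE T e (sE T e u v x) y z - sE T e x (tE T e v u y) z +
          sE T e x y (sE T e u v z) := by
    intro u v x y z
    have h := congrArg (fun w : J => T e w e)
      (starT (T e u e) (T e v e) (T e x e) (T e y e) (T e z e))
    simp only [map_add, map_sub, LinearMap.add_apply, LinearMap.sub_apply,
      hST, hTS, hS2] at h
    exact h
  -- Step 4: conclude.
  intro x y
  constructor
  · -- flexibility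
    have h := starT e x y x e
    simp only [tE, sE, map_add, map_sub, LinearMap.add_apply, LinearMap.sub_apply,
      hU, hU'] at h
    have key : (2:F) • (T (T x e y) e x) = (2:F) • (T x e (T y e x)) := by
      linear_combination (norm := module) -(1:F) • h
    exact smul_right_injective J hchar2 key
  · -- Jordan identity
    have h1 := starT e y x x x
    simp only [tE, sE, map_add, map_sub, LinearMap.add_apply, LinearMap.sub_apply, hU, hU'] at h1
    have h2 := starS e y x x x
    simp only [tE, sE, map_add, map_sub, LinearMap.add_apply, LinearMap.sub_apply, hU, hU'] at h2
    have h3 := starT e y x (T x e x) e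
    simp only [tE, sE, map_add, map_sub, LinearMap.add_apply, LinearMap.sub_apply, hU, hU'] at h3
    have h4 := starT e y (T x e x) x e
    simp only [tE, sE, map_add, map_sub, LinearMap.add_apply, LinearMap.sub_apply, hU, hU'] at h4
    have h5 := starT e x y x x
    simp only [tE, sE, map_add, map_sub, LinearMap.add_apply, LinearMap.sub_apply, hU, hU'] at h5
    have h6 := starS e x y x x
    simp only [tE, sE, map_add, map_sub, LinearMap.add_apply, LinearMap.sub_apply, hU, hU'] at h6
    have h7 := starT e x x y x
    simp only [tE, sE, map_add, map_sub, LinearMap.add_apply, LinearMap.sub_apply, hU, hU'] at h7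
    have h8 := starS e x x y x
    simp only [tE, sE, map_add, map_sub, LinearMap.add_apply, LinearMap.sub_apply, hU, hU'] at h8
    have h9 := starT e x x x y
    simp only [tE, sE, map_add, map_sub, LinearMap.add_apply, LinearMap.sub_apply, hU, hU'] at h9
    have h10 := starS e x x x y
    simp only [tE, sE, map_add, map_sub, LinearMap.add_apply, LinearMap.sub_apply, hU, hU'] at h10
    have h11 := starT e x x (T y e x) e
    simp only [tE, sE, map_add, map_sub, LinearMap.add_apply, LinearMap.sub_apply, hU, hU'] at h11
    have h12 := starS e x x (T x e y) e
    simp only [tE, sE, map_add, map_sub, LinearMap.add_apply, LinearMap.sub_apply, hU, hU'] at h12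
    have h13 := starT e x (T y e x) x e
    simp only [tE, sE, map_add, map_sub, LinearMap.add_apply, LinearMap.sub_apply, hU, hU'] at h13
    have h14 := congrArg (fun w : J => T x e w) (starT e y x x e)
    simp only [tE, sE, map_add, map_sub, LinearMap.add_apply, LinearMap.sub_apply, hU, hU'] at h14
    have h12ne : (12:F) ≠ 0 := by
      have : (12:F) = 2 * 2 * 3 := by norm_num
      rw [this]
      exact mul_ne_zero (mul_ne_zero hchar2 hchar2) hchar3
    have key : (12:F) • (T (T x e y) e (T x e x)) =
        (12:F) • (T x e (T y e (T x e x))) := by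
      linear_combination (norm := module) (8:F) • h1 - (4:F) • h2 - (4:F) • h3 -
        (2:F) • h4 - (6:F) • h5 + (2:F) • h6 - (1:F) • h7 - (1:F) • h8 -
        (1:F) • h9 - (1:F) • h10 - (1:F) • h11 - (5:F) • h12 - (4:F) • h13 -
        (4:F) • h14
    exact smul_right_injective J h12ne key
end
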